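/- Let N ≥ 2 and N/2 < K < N be integers. For every function g : (ℤ/Nℤ) × Γ_{K,2K−N} → ℝ and every pair (x,η) with η ∈ ℰ_{N,K} and η_x = 1, the intertwining identity holds: L^{tag}(g ∘ Φ̃)(x,η) = (L^{c}g)(Φ̃(x,η)). -/

import Mathlib

open scoped Classical BigOperators

noncomputable section

/-- A particle configuration on the discrete circle `ℤ/Mℤ`. -/
abbrev Conf (M : ℕ) := ZMod M → Bool

/-- Number of occupied sites (particles) of a configuration. -/
def numParticles {M : ℕ} [NeZero M] (η : Conf M) : ℕ :=
  (Finset.univ.filter fun x => η x = true).card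

/-- Ergodicity: every pair of neighbouring sites carries at least one particle. -/
def isErgodic {M : ℕ} (η : Conf M) : Prop :=
  ∀ x : ZMod M, η x = true ∨ η (x + 1) = true

/-- The configuration `η` with the values at `x` and `y` exchanged. -/
def swapConf {α : Type*} [DecidableEq α] (η : α → Bool) (x y : α) : α → Bool :=
  fun z => if z = x then η y else if z = y then η x else η z

/-- The representative of `k ∈ ℤ/Kℤ` in `{1, …, K}`. -/
def repOne {K : ℕ} [NeZero K] (k : ZMod K) : ℕ :=
  if k.val = 0 then K else k.val

/-- `Σ_{y=1}^{x} η_y`, the number of particles among sites `1, …, x`. -/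
def countUpTo {N : ℕ} (η : Conf N) (x : ℕ) : ℕ :=
  ∑ y ∈ Finset.Icc 1 x, (if η ((y : ℕ) : ZMod N) = true then 1 else 0)

/-- `x_k(η) ∈ {1, …, N}`: the position of the `k`-th particle of `η`. -/
def pos {N K : ℕ} [NeZero K] (η : Conf N) (k : ZMod K) : ℕ :=
  sInf {x : ℕ | 1 ≤ x ∧ x ≤ N ∧ countUpTo η x = repOne k}

/-- The clockwise distance `d(a,b) ∈ {1, …, M}` from `a` to `b` on `ℤ/Mℤ`. -/
def cdist {M : ℕ} [NeZero M] (a b : ZMod M) : ℕ :=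
  if (b - a).val = 0 then M else (b - a).val

/-- The (integer) value `σ^{(k,η)}_l = 2 − d(x_{k+l−1}(η), x_{k+l}(η))`. -/
def sigmaVal {N K : ℕ} [NeZero N] [NeZero K] (η : Conf N) (k l : ZMod K) : ℤ :=
  2 - (cdist ((pos η (k + l - 1) : ℕ) : ZMod N) ((pos η (k + l) : ℕ) : ZMod N) : ℤ)

/-- The SSEP configuration `σ^{(k,η)}`, occupied at `l` iff `σ^{(k,η)}_l = 1`. -/
def sigmaConf {N K : ℕ} [NeZero N] [NeZero K] (η : Conf N) (k : ZMod K) : Conf K :=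
  fun l => decide (cdist ((pos η (k + l - 1) : ℕ) : ZMod N) ((pos η (k + l) : ℕ) : ZMod N) = 1)

/-- The representative of `x ∈ ℤ/Nℤ` in `{1, …, N}`. -/
def repN {M : ℕ} [NeZero M] (x : ZMod M) : ℕ :=
  if x.val = 0 then M else x.val

/-- The rank `r(x,η) = Σ_{y=1}^{x̄} η_y mod K` of the occupied site `x` in `η`. -/
def rankOf (K : ℕ) {N : ℕ} [NeZero N] (x : ZMod N) (η : Conf N) : ZMod K :=
  ((countUpTo η (repN x) : ℕ) : ZMod K)

/-- The tagged-particle FEP generator, acting on functions of (tagged position, configuration). -/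
def Ltag {N : ℕ} [NeZero N] (f : ZMod N × Conf N → ℝ) (x : ZMod N) (η : Conf N) : ℝ :=
  (∑ y ∈ Finset.univ.filter (fun y : ZMod N => y ≠ x), ∑ s : Bool,
    (if η y = true ∧ η (y - (if s then 1 else -1)) = true
        ∧ η (y + (if s then 1 else -1)) = false
      then f (x, swapConf η y (y + (if s then 1 else -1))) - f (x, η) else 0))
  + ∑ s : Bool,
    (if η (x - (if s then 1 else -1)) = true ∧ η (x + (if s then 1 else -1)) = false
      then f (x + (if s then 1 else -1), swapConf η x (x + (if s then 1 else -1))) - f (x, η)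
      else 0)

/-- The generator of the SSEP on `ℤ/Kℤ` together with its current through the edge `(K,1)`,
tracked additively in `ℤ/Nℤ`. -/
def Lc {N K : ℕ} [NeZero N] [NeZero K] (g : ZMod N × Conf K → ℝ) (x : ZMod N) (σ : Conf K) : ℝ :=
  (∑ k ∈ Finset.Ico 1 K,
    (g (x, swapConf σ ((k : ℕ) : ZMod K) (((k + 1 : ℕ) : ℕ) : ZMod K)) - g (x, σ)))
  + (g (x + ((((if σ ((K : ℕ) : ZMod K) = true then 1 else 0)
          - (if σ ((1 : ℕ) : ZMod K) = true then 1 else 0) : ℤ)) : ZMod N),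
        swapConf σ ((K : ℕ) : ZMod K) ((1 : ℕ) : ZMod K)) - g (x, σ))


/-!
Label the particles of `η` clockwise by their rank; starting from the tagged particle `x`,
`σ = σ^{(r(x,η),η)}` records which of the consecutive gaps have length one. Since `η` is ergodic,
the particle after `w` sits at `w + 1` or `w + 2`, so this labelling is rigid: a jump of the
particle at `y` to `y + z` (allowed only when `y - z` is occupied and `y + z` is empty) commutes
with the successor map up to the transposition of `y` and `y + z`, and therefore simply exchanges
the two gaps next to `y`. For `y ≠ x` this is the SSEP exchange of `σ` across the bond
`(r(y) - r(x), r(y) - r(x) + 1)`; for `y = x` it is the exchange across the bond `(K, 1)`, and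
the tag moves by `z = σ_K - σ_1`. Reindexing the non-tagged particles by their relative rank
matches the two generators term by term.
-/

open Finset

section Counting

variable {N : ℕ}

lemma countUpTo_zero (η : Conf N) : countUpTo η 0 = 0 := rfl

lemma countUpTo_succ (η : Conf N) (x : ℕ) :
    countUpTo η (x + 1) = countUpTo η x + if η ((x + 1 : ℕ) : ZMod N) = true then 1 else 0 :=
  sum_Icc_succ_top (by omega) _

lemma countUpTo_mono (η : Conf N) : Monotone (countUpTo η) := fun _ _ hab =>
  sum_le_sum_of_subset (Icc_subset_Icc_right hab)

lemma exists_countUpTo_eq (η : Conf N) {n r : ℕ} (hr : r ≤ countUpTo η n) :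
    ∃ x ≤ n, countUpTo η x = r := by
  induction n with
  | zero => exact ⟨0, le_rfl, by simp_all [countUpTo_zero]⟩
  | succ n ih =>
    by_cases h : r ≤ countUpTo η n
    · obtain ⟨x, hxn, hx⟩ := ih h
      exact ⟨x, by omega, hx⟩
    · refine ⟨n + 1, le_rfl, ?_⟩
      rw [countUpTo_succ] at hr ⊢
      split at hr <;> split <;> simp_all <;> omega

variable [NeZero N]

lemma repN_mem_Icc (x : ZMod N) : repN x ∈ Icc 1 N := by
  have := ZMod.val_lt x
  unfold repN
  split <;> simp <;> omega

lemma repN_natCast {a : ℕ} (ha : a ∈ Icc 1 N) : repN (a : ZMod N) = a := by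
  rw [mem_Icc] at ha
  unfold repN
  rcases ha.2.eq_or_lt with rfl | h
  · simp
  · rw [ZMod.val_natCast, Nat.mod_eq_of_lt h]
    split <;> omega

lemma natCast_repN (x : ZMod N) : ((repN x : ℕ) : ZMod N) = x := by
  unfold repN
  split
  · next h => rw [ZMod.natCast_self, (ZMod.val_eq_zero x).mp h]
  · exact ZMod.natCast_zmod_val x

lemma repOne_eq_repN (k : ZMod N) : repOne k = repN k := rfl

lemma countUpTo_self (η : Conf N) : countUpTo η N = numParticles η := by
  rw [numParticles, card_filter]
  exact sum_nbij' (fun a => (a : ZMod N)) repN (fun _ _ => mem_univ _)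
    (fun x _ => repN_mem_Icc x) (fun a ha => repN_natCast ha) (fun x _ => natCast_repN x)
    (fun _ _ => rfl)

end Counting

section NextOccupied

variable {N : ℕ} {η : Conf N}

def nextOccupied (η : Conf N) (w : ZMod N) : ZMod N :=
  if η (w + 1) = true then w + 1 else w + 2

lemma nextOccupied_occupied (herg : isErgodic η) (w : ZMod N) : η (nextOccupied η w) = true := by
  unfold nextOccupied
  split
  · assumption
  · next h => rw [show w + 2 = w + 1 + 1 by ring]; exact (herg (w + 1)).resolve_left h

lemma ZMod.two_ne_zero_of_three_le (hN : 3 ≤ N) : (2 : ZMod N) ≠ 0 := by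
  rw [← Nat.cast_ofNat, Ne, ZMod.natCast_eq_zero_iff]
  exact fun h => by have := Nat.le_of_dvd two_pos h; omega

lemma nextOccupied_ne_self (hN : 3 ≤ N) (w : ZMod N) : nextOccupied η w ≠ w := by
  have : Fact (1 < N) := ⟨by omega⟩
  unfold nextOccupied
  split
  · exact add_ne_left.2 one_ne_zero
  · exact add_ne_left.2 (ZMod.two_ne_zero_of_three_le hN)

variable [NeZero N]

lemma cdist_nextOccupied (hN : 2 ≤ N) (w : ZMod N) :
    cdist w (nextOccupied η w) = 1 ↔ η (w + 1) = true := by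
  have : Fact (1 < N) := ⟨hN⟩
  unfold nextOccupied cdist
  split
  · simp [*, ZMod.val_one]
  · rw [add_sub_cancel_left, ZMod.val_two_eq_two_mod]
    rcases hN.eq_or_lt with rfl | h
    · simp [*]
    · simp [*, Nat.mod_eq_of_lt h]

lemma rankOf_add_one {K : ℕ} (hcard : numParticles η = K) (w : ZMod N) :
    rankOf K (w + 1) η = rankOf K w η + if η (w + 1) = true then 1 else 0 := by
  have hmem := mem_Icc.1 (repN_mem_Icc w)
  rcases hmem.2.lt_or_eq with hlt | heq
  · have hw : w + 1 = ((repN w + 1 : ℕ) : ZMod N) := by push_cast; rw [natCast_repN]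
    rw [rankOf, rankOf, hw, repN_natCast (mem_Icc.2 ⟨by omega, hlt⟩), countUpTo_succ]
    push_cast
    rfl
  · have hw : w = 0 := by rw [← natCast_repN w, heq, ZMod.natCast_self]
    have h1 : w + 1 = ((0 + 1 : ℕ) : ZMod N) := by simp [hw]
    rw [rankOf, rankOf, heq, countUpTo_self, hcard, ZMod.natCast_self, zero_add, h1,
      repN_natCast (by simpa using NeZero.one_le), countUpTo_succ, countUpTo_zero]
    push_cast
    exact zero_add _

lemma rankOf_nextOccupied {K : ℕ} (hcard : numParticles η = K) (herg : isErgodic η)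
    (w : ZMod N) : rankOf K (nextOccupied η w) η = rankOf K w η + 1 := by
  unfold nextOccupied
  split
  · next h => rw [rankOf_add_one hcard, if_pos h]
  · next h =>
    have h2 : η (w + 1 + 1) = true := (herg (w + 1)).resolve_left h
    rw [show w + 2 = w + 1 + 1 by ring, rankOf_add_one hcard, rankOf_add_one hcard,
      if_pos h2, if_neg h, add_zero]

end NextOccupied

section Sites

variable {N K : ℕ} [NeZero K] {η : Conf N}

lemma pos_eq_of_countUpTo {m : ZMod K} {z : ℕ} (hz : z ∈ Icc 1 N)
    (hocc : η (z : ZMod N) = true) (hcount : countUpTo η z = repOne m) : pos η m = z := by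
  rw [mem_Icc] at hz
  refine le_antisymm (Nat.sInf_le ⟨hz.1, hz.2, hcount⟩) (not_lt.1 fun hlt => ?_)
  obtain ⟨h1, -, hpos⟩ := Nat.sInf_mem (s := {x | 1 ≤ x ∧ x ≤ N ∧ countUpTo η x = repOne m})
    ⟨z, hz.1, hz.2, hcount⟩
  have hstep := countUpTo_succ η (z - 1)
  rw [Nat.sub_add_cancel hz.1, if_pos hocc] at hstep
  have := countUpTo_mono η (Nat.le_sub_one_of_lt hlt)
  rw [pos] at this
  omega

variable [NeZero N]

def site (η : Conf N) (m : ZMod K) : ZMod N := (pos η m : ℕ)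

variable (hcard : numParticles η = K)
include hcard

lemma pos_spec (m : ZMod K) :
    pos η m ∈ Icc 1 N ∧ η (pos η m : ZMod N) = true ∧ countUpTo η (pos η m) = repOne m := by
  have hrep : 1 ≤ repOne m ∧ repOne m ≤ K := mem_Icc.1 (repN_mem_Icc m)
  obtain ⟨x, hxN, hx⟩ := exists_countUpTo_eq η (n := N) (r := repOne m)
    (by rw [countUpTo_self, hcard]; exact hrep.2)
  have hx1 : 1 ≤ x := Nat.one_le_iff_ne_zero.2 fun h => by
    rw [h, countUpTo_zero] at hx
    exact (hrep.1.trans_eq hx.symm).not_gt one_pos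
  obtain ⟨h1, hN, hpos⟩ : pos η m ∈ {x | 1 ≤ x ∧ x ≤ N ∧ countUpTo η x = repOne m} :=
    Nat.sInf_mem ⟨x, hx1, hxN, hx⟩
  refine ⟨mem_Icc.2 ⟨h1, hN⟩, by_contra fun hocc => ?_, hpos⟩
  have hstep := countUpTo_succ η (pos η m - 1)
  rw [Nat.sub_add_cancel h1, if_neg hocc, add_zero] at hstep
  have h0 : pos η m - 1 ≠ 0 := fun h => by rw [h, countUpTo_zero] at hstep; omega
  have : pos η m ≤ pos η m - 1 := Nat.sInf_le ⟨by omega, by omega, hstep ▸ hpos⟩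
  omega

lemma site_occupied (m : ZMod K) : η (site η m) = true := (pos_spec hcard m).2.1

lemma rankOf_site (m : ZMod K) : rankOf K (site η m) η = m := by
  obtain ⟨hmem, -, hcount⟩ := pos_spec hcard m
  rw [rankOf, site, repN_natCast hmem, hcount, repOne_eq_repN, natCast_repN]

lemma site_rankOf {y : ZMod N} (hy : η y = true) : site η (rankOf K y η) = y := by
  have hmem := repN_mem_Icc y
  have hstep := countUpTo_succ η (repN y - 1)
  rw [Nat.sub_add_cancel (mem_Icc.1 hmem).1, natCast_repN, if_pos hy] at hstep
  have hle : countUpTo η (repN y) ≤ K :=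
    hcard ▸ countUpTo_self η ▸ countUpTo_mono η (mem_Icc.1 hmem).2
  have hrank : repOne (rankOf K y η) = countUpTo η (repN y) :=
    repN_natCast (mem_Icc.2 ⟨by omega, hle⟩)
  rw [site, pos_eq_of_countUpTo hmem (by rwa [natCast_repN]) hrank.symm, natCast_repN]

lemma site_injective : Function.Injective (site η : ZMod K → ZMod N) := fun m m' h => by
  rw [← rankOf_site hcard m, h, rankOf_site hcard]

lemma site_add_one (herg : isErgodic η) (m : ZMod K) :
    site η (m + 1) = nextOccupied η (site η m) := by
  rw [← site_rankOf hcard (nextOccupied_occupied herg _), rankOf_nextOccupied hcard herg,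
    rankOf_site hcard]

variable (herg : isErgodic η)
include herg

lemma sigmaConf_apply (hN : 2 ≤ N) (k l : ZMod K) :
    sigmaConf η k l = η (site η (k + l - 1) + 1) := by
  have hnext : site η (k + l) = nextOccupied η (site η (k + l - 1)) := by
    simpa using site_add_one hcard herg (k + l - 1)
  show decide (cdist (site η (k + l - 1)) (site η (k + l)) = 1) = _
  rw [hnext, Bool.eq_iff_iff, decide_eq_true_iff, cdist_nextOccupied hN]

lemma sigmaConf_rankOf_sub (hN : 2 ≤ N) (k : ZMod K) {y : ZMod N} (hy : η y = true) :
    sigmaConf η k (rankOf K y η - k) = η (y - 1) := by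
  rw [sigmaConf_apply hcard herg hN, add_sub_cancel]
  set w := site η (rankOf K y η - 1)
  have hnext : nextOccupied η w = y := by
    rw [← site_add_one hcard herg, sub_add_cancel, site_rankOf hcard hy]
  unfold nextOccupied at hnext
  split at hnext
  · rwa [← hnext, add_sub_cancel_right, site_occupied hcard]
  · rw [← hnext, show w + 2 - 1 = w + 1 by ring]

lemma sigmaConf_rankOf_sub_add_one (hN : 2 ≤ N) (k : ZMod K) {y : ZMod N} (hy : η y = true) :
    sigmaConf η k (rankOf K y η - k + 1) = η (y + 1) := by
  rw [sigmaConf_apply hcard herg hN, show k + (rankOf K y η - k + 1) - 1 = rankOf K y η by ring,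
    site_rankOf hcard hy]

end Sites

section Swap

variable {α : Type*} [DecidableEq α]

lemma swapConf_eq_comp (η : α → Bool) (a b : α) : swapConf η a b = η ∘ Equiv.swap a b := by
  funext u
  simp only [swapConf, Function.comp_apply, Equiv.swap_apply_def]
  split_ifs <;> rfl

lemma swapConf_apply_left (η : α → Bool) (a b : α) : swapConf η a b a = η b := by
  simp [swapConf_eq_comp]

lemma swapConf_apply_right (η : α → Bool) (a b : α) : swapConf η a b b = η a := by
  simp [swapConf_eq_comp]

lemma swapConf_apply_of_ne (η : α → Bool) {a b u : α} (ha : u ≠ a) (hb : u ≠ b) :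
    swapConf η a b u = η u := by
  simp [swapConf_eq_comp, Equiv.swap_apply_of_ne_of_ne ha hb]

lemma swapConf_of_eq (η : α → Bool) {a b : α} (h : η a = η b) : swapConf η a b = η := by
  funext u
  simp only [swapConf]
  split_ifs with ha hb <;> simp [*]

lemma numParticles_swapConf {N : ℕ} [NeZero N] (η : Conf N) (a b : ZMod N) :
    numParticles (swapConf η a b) = numParticles η := by
  rw [numParticles, numParticles, card_filter, card_filter, swapConf_eq_comp]
  exact Equiv.sum_comp (Equiv.swap a b) fun x => if η x = true then 1 else 0

end Swap

section Jump

variable {N : ℕ} {η : Conf N} {y z : ZMod N}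

structure IsJump (η : Conf N) (y z : ZMod N) : Prop where
  dir : z = 1 ∨ z = -1
  occupied : η y = true
  facilitated : η (y - z) = true
  target_empty : η (y + z) = false

lemma IsJump.ne_zero (hj : IsJump η y z) (hN : 2 ≤ N) : z ≠ 0 := by
  have : Fact (1 < N) := ⟨hN⟩
  rcases hj.dir with rfl | rfl <;> simp

lemma IsJump.two_mul_ne_zero (hj : IsJump η y z) (hN : 3 ≤ N) : 2 * z ≠ 0 := by
  rcases hj.dir with rfl | rfl <;> simpa using ZMod.two_ne_zero_of_three_le hN

lemma IsJump.swapConf_apply_add (hj : IsJump η y z) : swapConf η y (y + z) (y + z) = true := by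
  rw [swapConf_apply_right, hj.occupied]

lemma IsJump.swapConf_apply_sub (hj : IsJump η y z) (hN : 3 ≤ N) :
    swapConf η y (y + z) (y - z) = true := by
  rw [swapConf_apply_of_ne η (fun h => hj.ne_zero (by omega) (by linear_combination -h))
    (fun h => hj.two_mul_ne_zero hN (by linear_combination -h)), hj.facilitated]

lemma IsJump.isErgodic_swapConf (hj : IsJump η y z) (herg : isErgodic η) (hN : 3 ≤ N) :
    isErgodic (swapConf η y (y + z)) := by
  have hmono : ∀ u, u ≠ y → η u = true → swapConf η y (y + z) u = true := fun u hu h => by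
    by_cases hu' : u = y + z
    · rw [hu', hj.swapConf_apply_add]
    · rwa [swapConf_apply_of_ne η hu hu']
  have hplus := hj.swapConf_apply_add
  have hminus := hj.swapConf_apply_sub hN
  intro u
  by_cases hu : u = y ∨ u + 1 = y
  · rcases hj.dir with rfl | rfl <;> rcases hu with rfl | hu
    · exact Or.inr hplus
    · exact Or.inl (by rwa [show u = y - 1 by linear_combination hu])
    · exact Or.inr (by rwa [show u + 1 = u - -1 by ring])
    · exact Or.inl (by rwa [show u = y + -1 by linear_combination hu])
  · obtain ⟨hu₀, hu₁⟩ := not_or.1 hu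
    exact (herg u).imp (hmono u hu₀) (hmono _ hu₁)

lemma IsJump.swap_apply_of_occupied (hj : IsJump η y z) {u : ZMod N} (hu : η u = true)
    (huy : u ≠ y) : Equiv.swap y (y + z) u = u :=
  Equiv.swap_apply_of_ne_of_ne huy fun h => by simp [h, hj.target_empty] at hu

lemma IsJump.swapConf_apply_add_add_one (hj : IsJump η y z) (herg : isErgodic η) (hN : 3 ≤ N) :
    swapConf η y (y + z) (y + z + 1) = η (y - 1) := by
  have : Fact (1 < N) := ⟨by omega⟩
  obtain ⟨hz | hz, hy, hb, ht⟩ := hj <;> subst hz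
  · rw [swapConf_apply_of_ne, hb]
    · exact (herg (y + 1)).resolve_left (by simp [ht])
    · exact fun h => ZMod.two_ne_zero_of_three_le hN (by linear_combination h)
    · exact add_ne_left.2 one_ne_zero
  · rw [neg_add_cancel_right, swapConf_apply_left, sub_eq_add_neg]

lemma IsJump.swapConf_apply_add_one_of_nextOccupied_eq (hj : IsJump η y z) {w : ZMod N}
    (hw : η w = true) (hwy : nextOccupied η w = y) :
    swapConf η y (y + z) (w + 1) = η (y + 1) := by
  obtain ⟨hz | hz, hy, hb, ht⟩ := hj <;> subst hz <;> unfold nextOccupied at hwy <;>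
    split at hwy
  · rw [hwy, swapConf_apply_left]
  · rename_i h1
    exact (h1 (by rwa [show w + 1 = y - 1 by linear_combination hwy])).elim
  · simp [show w = y + -1 by linear_combination hwy, ht] at hw
  · rw [show w + 1 = y + -1 by linear_combination hwy, swapConf_apply_right, hy, ← hb,
      sub_neg_eq_add]

lemma IsJump.swapConf_apply_add_one_of_ne (hj : IsJump η y z) {w : ZMod N} (hwy : w ≠ y)
    (hny : nextOccupied η w ≠ y) : swapConf η y (y + z) (w + 1) = η (w + 1) := by
  refine swapConf_apply_of_ne η (fun h => hny ?_) (fun h => ?_)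
  · rw [nextOccupied, h, if_pos hj.occupied]
  · rcases hj.dir with rfl | rfl
    · exact hwy (add_right_cancel h)
    · refine hny ?_
      rw [nextOccupied, h, if_neg (by simp [hj.target_empty])]
      linear_combination h

lemma IsJump.nextOccupied_swapConf_add (hj : IsJump η y z) (herg : isErgodic η) (hN : 3 ≤ N) :
    nextOccupied (swapConf η y (y + z)) (y + z) = nextOccupied η y := by
  rw [nextOccupied, hj.swapConf_apply_add_add_one herg hN]
  obtain ⟨hz | hz, hy, hb, ht⟩ := hj <;> subst hz
  · simp only [nextOccupied, hb, ht, if_true, Bool.false_eq_true, if_false]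
    ring
  · rw [sub_neg_eq_add] at hb
    rw [← sub_eq_add_neg] at ht
    simp only [nextOccupied, hb, ht, if_true, Bool.false_eq_true, if_false]
    ring

lemma IsJump.nextOccupied_swapConf_of_eq (hj : IsJump η y z) {w : ZMod N} (hw : η w = true)
    (hwy : nextOccupied η w = y) : nextOccupied (swapConf η y (y + z)) w = y + z := by
  rw [nextOccupied, hj.swapConf_apply_add_one_of_nextOccupied_eq hw hwy]
  obtain ⟨hz | hz, hy, hb, ht⟩ := hj <;> subst hz <;> unfold nextOccupied at hwy <;>
    split at hwy
  · rw [ht, if_neg Bool.false_ne_true]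
    linear_combination hwy
  · rename_i h1
    exact (h1 (by rwa [show w + 1 = y - 1 by linear_combination hwy])).elim
  · simp [show w = y + -1 by linear_combination hwy, ht] at hw
  · rw [← sub_neg_eq_add, hb, if_pos rfl]
    linear_combination hwy

lemma IsJump.nextOccupied_swapConf_swap (hj : IsJump η y z) (herg : isErgodic η) (hN : 3 ≤ N)
    {w : ZMod N} (hw : η w = true) :
    nextOccupied (swapConf η y (y + z)) (Equiv.swap y (y + z) w)
      = Equiv.swap y (y + z) (nextOccupied η w) := by
  have hnext := nextOccupied_occupied herg w
  by_cases hwy : w = y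
  · subst hwy
    rw [Equiv.swap_apply_left, hj.nextOccupied_swapConf_add herg hN,
      hj.swap_apply_of_occupied hnext (nextOccupied_ne_self hN w)]
  rw [hj.swap_apply_of_occupied hw hwy]
  by_cases hny : nextOccupied η w = y
  · rw [hj.nextOccupied_swapConf_of_eq hw hny, hny, Equiv.swap_apply_left]
  · rw [nextOccupied, hj.swapConf_apply_add_one_of_ne hwy hny, ← nextOccupied,
      hj.swap_apply_of_occupied hnext hny]

lemma sum_jump_terms_eq {y : ZMod N} (hy : η y = true) (F : ZMod N → ℝ) (c G : ℝ)
    (hjump : ∀ z, IsJump η y z → F z = G) (hstay : η (y - 1) = η (y + 1) → G = c) :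
    ∑ s : Bool, (if η (y - (if s then 1 else -1)) = true ∧ η (y + (if s then 1 else -1)) = false
      then F (if s then 1 else -1) - c else 0) = G - c := by
  rw [Fintype.sum_bool]
  simp only [if_true, Bool.false_eq_true, if_false, sub_neg_eq_add, ← sub_eq_add_neg]
  cases hl : η (y - 1) <;> cases hr : η (y + 1)
  · simp [hstay (hl.trans hr.symm)]
  · rw [hjump (-1) ⟨Or.inr rfl, hy, by rwa [sub_neg_eq_add], by rwa [← sub_eq_add_neg]⟩]
    simp
  · rw [hjump 1 ⟨Or.inl rfl, hy, hl, hr⟩]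
    simp
  · simp [hstay (hl.trans hr.symm)]

end Jump

section Intertwining

variable {N K : ℕ} [NeZero N] [NeZero K] {η : Conf N} {y z : ZMod N}

lemma IsJump.site_swapConf (hj : IsJump η y z) (hcard : numParticles η = K)
    (herg : isErgodic η) (hN : 3 ≤ N) {x : ZMod N} (hx : η x = true) (l : ZMod K) :
    site (swapConf η y (y + z)) (rankOf K (Equiv.swap y (y + z) x) (swapConf η y (y + z)) + l)
      = Equiv.swap y (y + z) (site η (rankOf K x η + l)) := by
  have hcard' : numParticles (swapConf η y (y + z)) = K := by rwa [numParticles_swapConf]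
  have herg' := hj.isErgodic_swapConf herg hN
  obtain ⟨j, rfl⟩ := ZMod.natCast_zmod_surjective l
  induction j with
  | zero =>
    have hx' : swapConf η y (y + z) (Equiv.swap y (y + z) x) = true := by
      rwa [swapConf_eq_comp, Function.comp_apply, Equiv.swap_apply_self]
    rw [Nat.cast_zero, add_zero, add_zero, site_rankOf hcard' hx', site_rankOf hcard hx]
  | succ j ih =>
    rw [Nat.cast_succ, ← add_assoc, ← add_assoc, site_add_one hcard' herg',
      site_add_one hcard herg, ih, hj.nextOccupied_swapConf_swap herg hN (site_occupied hcard _)]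

lemma IsJump.sigmaConf_swapConf (hj : IsJump η y z) (hcard : numParticles η = K)
    (herg : isErgodic η) (hN : 3 ≤ N) {x : ZMod N} (hx : η x = true) :
    sigmaConf (swapConf η y (y + z)) (rankOf K (Equiv.swap y (y + z) x) (swapConf η y (y + z)))
      = swapConf (sigmaConf η (rankOf K x η))
          (rankOf K y η - rankOf K x η) (rankOf K y η - rankOf K x η + 1) := by
  have hcard' : numParticles (swapConf η y (y + z)) = K := by rwa [numParticles_swapConf]
  have herg' := hj.isErgodic_swapConf herg hN
  set k := rankOf K x η
  set j := rankOf K y η - k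
  funext l
  rw [sigmaConf_apply hcard' herg' (by omega), add_sub_assoc, hj.site_swapConf hcard herg hN hx,
    ← add_sub_assoc]
  set q := site η (k + l - 1)
  have hq : η q = true := site_occupied hcard _
  have hnext : nextOccupied η q = site η (k + l) := by
    rw [← site_add_one hcard herg, sub_add_cancel]
  by_cases hl₁ : l = j + 1
  · have hqy : q = y := by
      simp only [q, j, hl₁]
      rw [show k + (rankOf K y η - k + 1) - 1 = rankOf K y η by ring, site_rankOf hcard hj.occupied]
    rw [hqy, Equiv.swap_apply_left, hj.swapConf_apply_add_add_one herg hN, hl₁,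
      swapConf_apply_right, sigmaConf_rankOf_sub hcard herg (by omega) _ hj.occupied]
  have hqy : q ≠ y := fun h => hl₁ <| by
    have := congrArg (rankOf K · η) h
    simp only [q, rankOf_site hcard] at this
    linear_combination this
  rw [hj.swap_apply_of_occupied hq hqy]
  by_cases hl₀ : l = j
  · have hny : nextOccupied η q = y := by
      rw [hnext, hl₀, add_sub_cancel, site_rankOf hcard hj.occupied]
    rw [hj.swapConf_apply_add_one_of_nextOccupied_eq hq hny, hl₀, swapConf_apply_left,
      sigmaConf_rankOf_sub_add_one hcard herg (by omega) _ hj.occupied]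
  have hny : nextOccupied η q ≠ y := fun h => hl₀ <| by
    have := congrArg (rankOf K · η) (hnext.symm.trans h)
    simp only [rankOf_site hcard] at this
    linear_combination this
  rw [hj.swapConf_apply_add_one_of_ne hqy hny, swapConf_apply_of_ne _ hl₀ hl₁,
    sigmaConf_apply hcard herg (by omega)]

lemma sum_ne_eq_sum_Ico (hcard : numParticles η = K) {x : ZMod N} (hx : η x = true)
    (F : ZMod N → ℝ) (G : ZMod K → ℝ) (hF₀ : ∀ y, η y = false → F y = 0)
    (hFG : ∀ y, η y = true → y ≠ x → F y = G (rankOf K y η - rankOf K x η)) :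
    ∑ y ∈ univ.filter (· ≠ x), F y = ∑ i ∈ Ico 1 K, G i := by
  set k := rankOf K x η
  rw [← sum_filter_of_ne (p := fun y => η y = true) fun y _ hy => by
    by_contra h; exact hy (hF₀ y (by simpa using h))]
  refine sum_nbij' (fun y => (rankOf K y η - k).val) (fun i : ℕ => site η (k + (i : ZMod K)))
    ?_ ?_ ?_ ?_ ?_
  · intro y hy
    simp only [mem_filter, mem_univ, true_and] at hy
    refine mem_Ico.2 ⟨Nat.one_le_iff_ne_zero.2 fun h => hy.1 ?_, ZMod.val_lt _⟩
    rw [ZMod.val_eq_zero, sub_eq_zero] at h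
    rw [← site_rankOf hcard hy.2, h, site_rankOf hcard hx]
  · intro i hi
    rw [mem_Ico] at hi
    simp only [mem_filter, mem_univ, true_and]
    refine ⟨fun h => ?_, site_occupied hcard _⟩
    have := site_injective hcard (h.trans (site_rankOf hcard hx).symm)
    rw [add_eq_left, ← ZMod.val_eq_zero, ZMod.val_cast_of_lt hi.2] at this
    omega
  · intro y hy
    simp only [mem_filter, mem_univ, true_and] at hy
    simp only [ZMod.natCast_val, ZMod.cast_id', id, add_sub_cancel, site_rankOf hcard hy.2]
  · intro i hi
    rw [mem_Ico] at hi
    simp only [rankOf_site hcard, add_sub_cancel_left, ZMod.val_cast_of_lt hi.2]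
  · intro y hy
    simp only [mem_filter, mem_univ, true_and] at hy
    simp only [hFG y hy.2 hy.1, ZMod.natCast_val, ZMod.cast_id', id]

lemma Ltag_bulk_term_eq (hcard : numParticles η = K) (herg : isErgodic η) (hN : 3 ≤ N)
    (g : ZMod N × Conf K → ℝ) {x y : ZMod N} (hx : η x = true) (hy : η y = true) (hyx : y ≠ x) :
    ∑ s : Bool, (if η y = true ∧ η (y - (if s then 1 else -1)) = true
        ∧ η (y + (if s then 1 else -1)) = false
      then g (x, sigmaConf (swapConf η y (y + (if s then 1 else -1)))
          (rankOf K x (swapConf η y (y + (if s then 1 else -1)))))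
        - g (x, sigmaConf η (rankOf K x η)) else 0)
      = g (x, swapConf (sigmaConf η (rankOf K x η))
          (rankOf K y η - rankOf K x η) (rankOf K y η - rankOf K x η + 1))
        - g (x, sigmaConf η (rankOf K x η)) := by
  simp only [hy, true_and]
  refine sum_jump_terms_eq hy (fun z => g (x, sigmaConf (swapConf η y (y + z))
    (rankOf K x (swapConf η y (y + z))))) _ _ (fun z hj => ?_) (fun hstay => ?_)
  · rw [← hj.sigmaConf_swapConf hcard herg hN hx, hj.swap_apply_of_occupied hx hyx.symm]
  · rw [swapConf_of_eq _ (by rwa [sigmaConf_rankOf_sub hcard herg (by omega) _ hy,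
      sigmaConf_rankOf_sub_add_one hcard herg (by omega) _ hy])]

lemma Ltag_tagged_term_eq (hcard : numParticles η = K) (herg : isErgodic η) (hN : 3 ≤ N)
    (g : ZMod N × Conf K → ℝ) {x : ZMod N} (hx : η x = true) :
    ∑ s : Bool, (if η (x - (if s then 1 else -1)) = true ∧ η (x + (if s then 1 else -1)) = false
      then g (x + (if s then 1 else -1), sigmaConf (swapConf η x (x + (if s then 1 else -1)))
          (rankOf K (x + (if s then 1 else -1)) (swapConf η x (x + (if s then 1 else -1)))))
        - g (x, sigmaConf η (rankOf K x η)) else 0)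
      = g (x + (((if sigmaConf η (rankOf K x η) 0 = true then 1 else 0)
          - (if sigmaConf η (rankOf K x η) 1 = true then 1 else 0) : ℤ) : ZMod N),
          swapConf (sigmaConf η (rankOf K x η)) 0 1)
        - g (x, sigmaConf η (rankOf K x η)) := by
  have hσ₀ := sigmaConf_rankOf_sub hcard herg (by omega) (rankOf K x η) hx
  have hσ₁ := sigmaConf_rankOf_sub_add_one hcard herg (by omega) (rankOf K x η) hx
  rw [sub_self] at hσ₀
  rw [sub_self, zero_add] at hσ₁
  refine sum_jump_terms_eq hx (fun z => g (x + z, sigmaConf (swapConf η x (x + z))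
    (rankOf K (x + z) (swapConf η x (x + z))))) _ _ (fun z hj => ?_) (fun hstay => ?_)
  · have hσ := hj.sigmaConf_swapConf hcard herg hN hx
    rw [Equiv.swap_apply_left, sub_self, zero_add] at hσ
    rw [hσ, hσ₀, hσ₁]
    obtain ⟨hz | hz, -, hb, ht⟩ := hj <;> subst hz
    · simp [hb, ht]
    · rw [sub_neg_eq_add] at hb
      rw [← sub_eq_add_neg] at ht
      simp [hb, ht]
  · rw [hσ₀, hσ₁, hstay, sub_self, Int.cast_zero, add_zero,
      swapConf_of_eq _ (hσ₀.trans (hstay.trans hσ₁.symm))]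

end Intertwining

theorem fep_dynamic_mapping_intertwining_general
    (N K : ℕ) [NeZero N] [NeZero K] (h1 : N < 2 * K) (h2 : K < N)
    (g : ZMod N × Conf K → ℝ) (x : ZMod N) (η : Conf N)
    (hη : numParticles η = K ∧ isErgodic η) (hx : η x = true) :
    Ltag (fun p => g (p.1, sigmaConf p.2 (rankOf K p.1 p.2))) x η
      = Lc g x (sigmaConf η (rankOf K x η)) := by
  obtain ⟨hcard, herg⟩ := hη
  have hN : 3 ≤ N := by omega
  unfold Ltag Lc
  rw [ZMod.natCast_self, Nat.cast_one]
  congr 1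
  · simp only [Nat.cast_succ]
    refine sum_ne_eq_sum_Ico hcard hx _ (fun j => g (x, swapConf _ j (j + 1)) - _)
      (fun y hy => by simp [hy]) (fun y hy hyx => ?_)
    exact Ltag_bulk_term_eq hcard herg hN g hx hy hyx
  · exact Ltag_tagged_term_eq hcard herg hN g hx

/-- **Dynamic mapping (intertwining).**  For `N ≥ 2`, `N/2 < K < N`, every
`g : (ℤ/Nℤ) × Γ_{K,2K−N} → ℝ` and every pair `(x,η)` with `η ∈ ℰ_{N,K}` and `η_x = 1`,
`L^{tag}(g ∘ Φ̃)(x,η) = (L^{c}g)(Φ̃(x,η))`, where `Φ̃(x,η) = (x, σ^{(r(x,η),η)})`. -/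
theorem fep_dynamic_mapping_intertwining
    (N K : ℕ) [NeZero N] [NeZero K] (hN : 2 ≤ N) (h1 : N < 2 * K) (h2 : K < N)
    (g : ZMod N × Conf K → ℝ) (x : ZMod N) (η : Conf N)
    (hη : numParticles η = K ∧ isErgodic η) (hx : η x = true) :
    Ltag (fun p => g (p.1, sigmaConf p.2 (rankOf K p.1 p.2))) x η
      = Lc g x (sigmaConf η (rankOf K x η)) :=
  fep_dynamic_mapping_intertwining_general N K h1 h2 g x η hη hx

end
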